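/- Soundness of the Kolmogorov semantics: if a formula A is provable in classical affine logic AL_c, then for every bounded pocrim P and every assignment α from the variables to P, the Kolmogorov value v^K_α(A) equals 0. -/
import Mathlib


/-- A pocrim structure on a carrier `P` with distinguished element `zero`,
addition `add` and implication/residual `imp`.  Here `imp x y = zero`
expresses `x ≥ y` (ordering by increasing logical strength). -/
structure IsPocrim {P : Type*} (zero : P) (add : P → P → P) (imp : P → P → P) : Prop where
  add_assoc : ∀ x y z : P, add (add x y) z = add x (add y z)
  add_comm : ∀ x y : P, add x y = add y x
  add_zero : ∀ x : P, add x zero = x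
  ge_refl : ∀ x : P, imp x x = zero
  ge_trans : ∀ x y z : P, imp x y = zero → imp y z = zero → imp x z = zero
  ge_antisymm : ∀ x y : P, imp x y = zero → imp y x = zero → x = y
  add_mono : ∀ x y z : P, imp x y = zero → imp (add x z) (add y z) = zero
  ge_zero : ∀ x : P, imp x zero = zero
  residuation : ∀ x y z : P, imp (add x y) z = zero ↔ imp x (imp y z) = zero

/-- A hoop is a pocrim satisfying commutativity of weak conjunction. -/
def IsHoop {P : Type*} (zero : P) (add : P → P → P) (imp : P → P → P) : Prop :=
  IsPocrim zero add imp ∧ ∀ x y : P, add x (imp x y) = add y (imp y x)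

/-- Formulas of the language L: countably many variables, the constant 1,
conjunction ⊗ and implication ⊸.  A^⊥ abbreviates A ⊸ 1. -/
inductive Fm : Type where
  | var : ℕ → Fm
  | one : Fm
  | tens : Fm → Fm → Fm
  | imp : Fm → Fm → Fm

/-- Provability in classical affine logic AL_c: the axiom schemata (Comp),
(Comm), (Curry), (Uncurry), (Wk), (EFQ) and (DNE), closed under modus
ponens. -/
inductive ALc : Fm → Prop where
  | comp (A B C : Fm) : ALc ((A.imp B).imp ((B.imp C).imp (A.imp C)))
  | comm (A B : Fm) : ALc ((A.tens B).imp (B.tens A))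
  | curry (A B C : Fm) : ALc (((A.tens B).imp C).imp (A.imp (B.imp C)))
  | uncurry (A B C : Fm) : ALc ((A.imp (B.imp C)).imp ((A.tens B).imp C))
  | wk (A B : Fm) : ALc ((A.tens B).imp A)
  | efq (A : Fm) : ALc (Fm.one.imp A)
  | dne (A : Fm) : ALc (((A.imp Fm.one).imp Fm.one).imp A)
  | mp (A B : Fm) : ALc A → ALc (A.imp B) → ALc B

/-- The Kolmogorov value of a formula in a bounded pocrim with annihilator
`one`, for an assignment α of the variables; δ(x) = (x → 1) → 1. -/
def Fm.kval {P : Type*} (one : P) (add imp : P → P → P) (α : ℕ → P) : Fm → P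
  | .var n => imp (imp (α n) one) one
  | .one => one
  | .tens A B => imp (imp (add (A.kval one add imp α) (B.kval one add imp α)) one) one
  | .imp A B => imp (imp (imp (A.kval one add imp α) (B.kval one add imp α)) one) one

section PocrimFacts

variable {P : Type*} {zero one : P} {add imp : P → P → P}

lemma Kol.imp_zero (hp : IsPocrim zero add imp) (x : P) : imp zero x = x := by
  apply hp.ge_antisymm
  · have h := (hp.residuation (imp zero x) zero x).mpr
    rw [hp.add_zero] at h
    exact h (hp.ge_refl _)
  · have h := (hp.residuation x zero x).mp
    rw [hp.add_zero] at h
    exact h (hp.ge_refl _)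

lemma Kol.curry_eq (hp : IsPocrim zero add imp) (x y z : P) :
    imp (add x y) z = imp x (imp y z) := by
  apply hp.ge_antisymm
  · apply (hp.residuation _ _ _).mp
    apply (hp.residuation _ _ _).mp
    rw [hp.add_assoc]
    exact (hp.residuation _ _ _).mpr (hp.ge_refl _)
  · apply (hp.residuation _ _ _).mp
    rw [← hp.add_assoc]
    exact (hp.residuation _ _ _).mpr ((hp.residuation _ _ _).mpr (hp.ge_refl _))

lemma Kol.swap (hp : IsPocrim zero add imp) (x y z : P) :
    imp x (imp y z) = imp y (imp x z) := by
  rw [← Kol.curry_eq hp, hp.add_comm, Kol.curry_eq hp]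

lemma Kol.ev (hp : IsPocrim zero add imp) (x y : P) :
    imp (add (imp x y) x) y = zero := by
  rw [Kol.curry_eq hp]; exact hp.ge_refl _

lemma Kol.ge_add (hp : IsPocrim zero add imp) (x y : P) :
    imp (add x y) x = zero := by
  rw [hp.add_comm x y, Kol.curry_eq hp, hp.ge_refl x]
  exact hp.ge_zero y

lemma Kol.one_ge (hp : IsPocrim zero add imp) (hb : ∀ x : P, add x one = one)
    (x : P) : imp one x = zero := by
  have h := Kol.ge_add hp x one
  rw [hb x] at h
  exact h

lemma Kol.antitone (hp : IsPocrim zero add imp) {x y : P} (z : P)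
    (h : imp x y = zero) : imp (imp y z) (imp x z) = zero := by
  rw [← Kol.curry_eq hp]
  have h1 : imp (add (imp y z) x) (add (imp y z) y) = zero := by
    rw [hp.add_comm (imp y z) x, hp.add_comm (imp y z) y]
    exact hp.add_mono x y (imp y z) h
  have h2 : imp (add (imp y z) y) z = zero := Kol.ev hp y z
  exact hp.ge_trans _ _ _ h1 h2

lemma Kol.x_ge_D (hp : IsPocrim zero add imp) (x : P) :
    imp x (imp (imp x one) one) = zero := by
  rw [Kol.swap hp]; exact hp.ge_refl _

lemma Kol.NNN (hp : IsPocrim zero add imp) (x : P) :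
    imp (imp (imp x one) one) one = imp x one := by
  apply hp.ge_antisymm
  · exact Kol.antitone hp one (Kol.x_ge_D hp x)
  · exact Kol.x_ge_D hp (imp x one)

lemma Kol.D_D (hp : IsPocrim zero add imp) (x : P) :
    imp (imp (imp (imp x one) one) one) one = imp (imp x one) one := by
  rw [Kol.NNN hp x]

lemma Kol.imp_D (hp : IsPocrim zero add imp) (t c : P) :
    imp (imp (imp t one) one) (imp (imp c one) one) = imp t (imp (imp c one) one) := by
  rw [Kol.swap hp (imp (imp t one) one) (imp c one) one, Kol.NNN hp t,
    Kol.swap hp (imp c one) t one]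

lemma Kol.D_imp (hp : IsPocrim zero add imp) (t c : P) :
    imp (imp (imp t (imp (imp c one) one)) one) one = imp t (imp (imp c one) one) := by
  rw [← Kol.curry_eq hp t (imp c one) one]
  exact Kol.NNN hp (add t (imp c one))

lemma Kol.D_mono (hp : IsPocrim zero add imp) {x y : P} (h : imp x y = zero) :
    imp (imp (imp x one) one) (imp (imp y one) one) = zero :=
  Kol.antitone hp one (Kol.antitone hp one h)

lemma Kol.comp_law (hp : IsPocrim zero add imp) (x y z : P) :
    imp (imp x y) (imp (imp y z) (imp x z)) = zero := by
  rw [← Kol.curry_eq hp, ← Kol.curry_eq hp]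
  have hre : add (add (imp x y) (imp y z)) x = add (add (imp x y) x) (imp y z) := by
    rw [hp.add_assoc, hp.add_comm (imp y z) x, ← hp.add_assoc]
  rw [hre]
  have h1 : imp (add (add (imp x y) x) (imp y z)) (add y (imp y z)) = zero :=
    hp.add_mono (add (imp x y) x) y (imp y z) (Kol.ev hp x y)
  have h2 : imp (add y (imp y z)) z = zero := by
    rw [hp.add_comm]; exact Kol.ev hp y z
  exact hp.ge_trans _ _ _ h1 h2

lemma Kol.goal_of_ge (hp : IsPocrim zero add imp) {x y : P}
    (h : imp x y = zero) : imp (imp (imp x y) one) one = zero := by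
  rw [h, Kol.imp_zero hp one]
  exact hp.ge_refl one

lemma Kol.regular (hp : IsPocrim zero add imp) (α : ℕ → P) (A : Fm) :
    imp (imp (A.kval one add imp α) one) one = A.kval one add imp α := by
  cases A with
  | var n => exact Kol.D_D hp (α n)
  | one => simp only [Fm.kval]; rw [hp.ge_refl one]; exact Kol.imp_zero hp one
  | tens A B => exact Kol.D_D hp _
  | imp A B => exact Kol.D_D hp _

end PocrimFacts

/-- Soundness of the Kolmogorov semantics: if A is provable in AL_c, then
its Kolmogorov value is 0 in every bounded pocrim, under every assignment. -/
theorem kolmogorov_sound {A : Fm} (hA : ALc A) :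
    ∀ (P : Type*) (zero one : P) (add imp : P → P → P),
      IsPocrim zero add imp → (∀ x : P, add x one = one) →
      ∀ (α : ℕ → P), A.kval one add imp α = zero := by
  induction hA with
  | comp X Y Z =>
    intro P zero one add imp hp hb α
    simp only [Fm.kval]
    apply Kol.goal_of_ge hp
    rw [Kol.imp_D hp (imp (Y.kval one add imp α) (Z.kval one add imp α))
      (imp (X.kval one add imp α) (Z.kval one add imp α))]
    rw [← Kol.regular hp α Z]
    rw [Kol.D_imp hp (X.kval one add imp α) (Z.kval one add imp α)]
    exact Kol.D_mono hp (Kol.comp_law hp (X.kval one add imp α) (Y.kval one add imp α)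
      (imp (imp (Z.kval one add imp α) one) one))
  | comm X Y =>
    intro P zero one add imp hp hb α
    simp only [Fm.kval]
    apply Kol.goal_of_ge hp
    rw [hp.add_comm (X.kval one add imp α) (Y.kval one add imp α)]
    exact hp.ge_refl _
  | curry X Y Z =>
    intro P zero one add imp hp hb α
    simp only [Fm.kval]
    apply Kol.goal_of_ge hp
    rw [← Kol.regular hp α Z]
    rw [Kol.imp_D hp (add (X.kval one add imp α) (Y.kval one add imp α)) (Z.kval one add imp α)]
    rw [Kol.curry_eq hp (X.kval one add imp α) (Y.kval one add imp α)
      (imp (imp (Z.kval one add imp α) one) one)]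
    rw [Kol.D_imp hp (Y.kval one add imp α) (Z.kval one add imp α)]
    exact hp.ge_refl _
  | uncurry X Y Z =>
    intro P zero one add imp hp hb α
    simp only [Fm.kval]
    apply Kol.goal_of_ge hp
    rw [← Kol.regular hp α Z]
    rw [Kol.imp_D hp (add (X.kval one add imp α) (Y.kval one add imp α)) (Z.kval one add imp α)]
    rw [Kol.curry_eq hp (X.kval one add imp α) (Y.kval one add imp α)
      (imp (imp (Z.kval one add imp α) one) one)]
    rw [Kol.D_imp hp (Y.kval one add imp α) (Z.kval one add imp α)]
    exact hp.ge_refl _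
  | wk X Y =>
    intro P zero one add imp hp hb α
    simp only [Fm.kval]
    apply Kol.goal_of_ge hp
    have h := Kol.D_mono (one := one) hp (Kol.ge_add hp (X.kval one add imp α) (Y.kval one add imp α))
    rw [Kol.regular hp α X] at h
    exact h
  | efq X =>
    intro P zero one add imp hp hb α
    simp only [Fm.kval]
    apply Kol.goal_of_ge hp
    exact Kol.one_ge hp hb _
  | dne X =>
    intro P zero one add imp hp hb α
    simp only [Fm.kval]
    apply Kol.goal_of_ge hp
    rw [Kol.NNN hp (X.kval one add imp α), Kol.D_D hp (X.kval one add imp α),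
      Kol.regular hp α X]
    exact hp.ge_refl _
  | mp X Y h1 h2 ih1 ih2 =>
    intro P zero one add imp hp hb α
    have ha := ih1 P zero one add imp hp hb α
    have hab := ih2 P zero one add imp hp hb α
    simp only [Fm.kval] at hab
    rw [ha, Kol.imp_zero hp, Kol.regular hp α Y] at hab
    exact hab
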